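/- Let K be a compact Hausdorff topological group, d ∈ ℕ, and ξ : K → ℝ a continuous function such that the iterated difference (∂_{g₁} ∘ ⋯ ∘ ∂_{g_{d+1}})(ξ) is identically zero for all g₁, …, g_{d+1} ∈ K. Then ξ is constant. (Every continuous real-valued polynomial map on a compact group is constant.) -/

import Mathlib

/-!
Induct on `d`. Each difference `∂_g ξ` is again bounded and killed by `d` further differences, so
by induction it is a constant `c`. Then `ξ (g⁻ⁿ) = ξ 1 + n c`, and boundedness of `ξ` forces
`c ≤ 0`; since `∂_{g⁻¹} ξ` is the constant `-c`, also `-c ≤ 0`. Hence every `∂_g ξ` vanishes,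
i.e. `ξ` is left invariant. A continuous function on a compact space is bounded.
-/

open Set Bornology Pointwise

/-- The left difference operator: `(∂_g ξ)(h) = ξ(g⁻¹h) - ξ(h)`. -/
def lDiff {K : Type*} [Group K] (g : K) (ξ : K → ℝ) : K → ℝ :=
  fun h => ξ (g⁻¹ * h) - ξ h

section LeftDifference

variable {K : Type*} [Group K] {ξ : K → ℝ}

theorem lDiff_inv_apply (g : K) (ξ : K → ℝ) (x : K) : lDiff g⁻¹ ξ x = -lDiff g ξ (g * x) := by
  simp [lDiff]

theorem isBounded_range_lDiff (hb : IsBounded (range ξ)) (g : K) :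
    IsBounded (range (lDiff g ξ)) :=
  (hb.sub hb).subset <| range_subset_iff.2 fun _ => sub_mem_sub (mem_range_self _) (mem_range_self _)

theorem apply_inv_pow_mul_of_lDiff_eq_const {g : K} {c : ℝ} (h : ∀ x, lDiff g ξ x = c)
    (n : ℕ) (x : K) : ξ (g⁻¹ ^ n * x) = ξ x + n * c := by
  induction n with
  | zero => simp
  | succ n ih =>
    have := h (g⁻¹ ^ n * x)
    rw [lDiff, ← mul_assoc, ← pow_succ'] at this
    push_cast
    linarith

theorem const_nonpos_of_lDiff_eq_const (hb : BddAbove (range ξ)) {g : K} {c : ℝ}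
    (h : ∀ x, lDiff g ξ x = c) : c ≤ 0 := by
  by_contra! hc
  obtain ⟨M, hM⟩ := hb
  obtain ⟨n, hn⟩ := exists_nat_gt ((M - ξ 1) / c)
  have hle : ξ (g⁻¹ ^ n * 1) ≤ M := hM (mem_range_self _)
  rw [apply_inv_pow_mul_of_lDiff_eq_const h] at hle
  rw [div_lt_iff₀ hc] at hn
  linarith

theorem lDiff_eq_zero_of_eq_const (hb : BddAbove (range ξ)) {g : K} {c : ℝ}
    (h : ∀ x, lDiff g ξ x = c) : lDiff g ξ = 0 := by
  have hneg : ∀ x, lDiff g⁻¹ ξ x = -c := fun x => by rw [lDiff_inv_apply, h]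
  have hc : c = 0 := le_antisymm (const_nonpos_of_lDiff_eq_const hb h)
    (neg_nonpos.1 (const_nonpos_of_lDiff_eq_const hb hneg))
  exact funext fun x => (h x).trans hc

theorem exists_eq_const_of_forall_lDiff_eq_zero (h : ∀ g : K, lDiff g ξ = 0) :
    ∃ c : ℝ, ∀ x : K, ξ x = c := by
  refine ⟨ξ 1, fun x => ?_⟩
  have := congrFun (h x⁻¹) 1
  simp only [lDiff, inv_inv, mul_one, Pi.zero_apply] at this
  linarith

theorem exists_eq_const_of_isBounded_of_foldr_lDiff_eq_zero (hb : IsBounded (range ξ)) (d : ℕ)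
    (hp : ∀ gs : List K, gs.length = d + 1 → gs.foldr lDiff ξ = 0) :
    ∃ c : ℝ, ∀ x : K, ξ x = c := by
  induction d generalizing ξ with
  | zero => exact exists_eq_const_of_forall_lDiff_eq_zero fun g => hp [g] rfl
  | succ d ih =>
    refine exists_eq_const_of_forall_lDiff_eq_zero fun g => ?_
    obtain ⟨c, hc⟩ := ih (isBounded_range_lDiff hb g) fun gs hl => by
      simpa [List.foldr_append] using hp (gs ++ [g]) (by simp [hl])
    exact lDiff_eq_zero_of_eq_const hb.bddAbove hc

end LeftDifference

theorem stmt7_general {K : Type*} [Group K] [TopologicalSpace K]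
    [CompactSpace K] (d : ℕ) (ξ : K → ℝ) (hc : Continuous ξ)
    (hp : ∀ gs : List K, gs.length = d + 1 → gs.foldr lDiff ξ = 0) :
    ∃ c : ℝ, ∀ x : K, ξ x = c :=
  exists_eq_const_of_isBounded_of_foldr_lDiff_eq_zero (isCompact_range hc).isBounded d hp

/-- Every continuous real-valued polynomial map on a compact Hausdorff topological group
is constant. -/
theorem stmt7 {K : Type*} [Group K] [TopologicalSpace K] [IsTopologicalGroup K]
    [CompactSpace K] [T2Space K] (d : ℕ) (ξ : K → ℝ) (hc : Continuous ξ)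
    (hp : ∀ gs : List K, gs.length = d + 1 → gs.foldr lDiff ξ = 0) :
    ∃ c : ℝ, ∀ x : K, ξ x = c :=
  stmt7_general d ξ hc hp
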